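/- Let X_1, X_2, ... be i.i.d. random vectors taking values in K, and suppose there exists a nonempty open set O ⊆ K with P( X_1 ∈ O ) = 0. Then there exists a constant c > 0 such that P( V_n ≥ c for all n ≥ 1 ) = 1; in particular, liminf_{n→∞} V_n > 0 almost surely, and for every sequence of positive reals (c_n) with c_n → 0 one has lim_{n→∞} P( V_n > c_n ) = 1, so the test based on V_n is consistent against every such alternative. -/

import Mathlib

/-!
Almost surely no sample point ever falls into the null open set `O`. Since `A` is bounded, a
small homothetic copy `x + r • A` fits inside `O ⊆ K`, so it avoids every sample and forces
`Vₙ ≥ r ^ d` for all `n` simultaneously. Comparing volumes gives `Vₙ ≤ |K| / |A| = 1`, which keeps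
the `liminf` away from its junk value.
-/

open MeasureTheory Filter

/-- The maximum spacing generated by the point set `Q` within `K`, with respect to the
reference set `A`. -/
noncomputable def maxSpacing (d : ℕ) (K A Q : Set (Fin d → ℝ)) : ℝ :=
  sSup {r : ℝ | 0 ≤ r ∧ ∃ x : Fin d → ℝ, (fun y => x + r • y) '' A ⊆ K \ Q}

open scoped Pointwise

theorem exists_pos_image_add_smul_subset {E : Type*} [SeminormedAddCommGroup E]
    [NormedSpace ℝ E] {A O : Set E} {x : E} (hA : Bornology.IsBounded A) (hO : IsOpen O)
    (hx : x ∈ O) : ∃ r : ℝ, 0 < r ∧ (fun y => x + r • y) '' A ⊆ O := by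
  obtain ⟨ρ, hρ, hball⟩ := Metric.isOpen_iff.1 hO x hx
  obtain ⟨R, hR, hAR⟩ := hA.subset_ball_lt 0 0
  refine ⟨ρ / R, by positivity, ?_⟩
  rintro _ ⟨y, hy, rfl⟩
  have hyR : ‖y‖ < R := by simpa using hAR hy
  apply hball
  rw [Metric.mem_ball, dist_eq_norm, add_sub_cancel_left, norm_smul,
    Real.norm_of_nonneg (by positivity)]
  calc ρ / R * ‖y‖ < ρ / R * R := by gcongr
    _ = ρ := div_mul_cancel₀ ρ hR.ne'

theorem addHaar_image_add_smul {E : Type*} [NormedAddCommGroup E] [NormedSpace ℝ E]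
    [MeasurableSpace E] [BorelSpace E] [FiniteDimensional ℝ E] (μ : Measure E)
    [μ.IsAddHaarMeasure] (x : E) {r : ℝ} (hr : 0 ≤ r) (A : Set E) :
    μ ((fun y => x + r • y) '' A) = ENNReal.ofReal (r ^ Module.finrank ℝ E) * μ A := by
  have : (fun y => x + r • y) '' A = x +ᵥ r • A := by
    rw [← Set.image_smul, ← Set.image_vadd, Set.image_image]
    rfl
  rw [this, measure_vadd, Measure.addHaar_smul_of_nonneg μ hr]

theorem ae_forall_notMem_of_map_eq {Ω α ι : Type*} [MeasurableSpace Ω] [MeasurableSpace α]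
    [Countable ι] {P : Measure Ω} {X : ι → Ω → α} {s : Set α} {j : ι}
    (hX : ∀ i, Measurable (X i)) (hident : ∀ i, P.map (X i) = P.map (X j))
    (hs : MeasurableSet s) (hnull : P {ω | X j ω ∈ s} = 0) :
    ∀ᵐ ω ∂P, ∀ i, X i ω ∉ s := by
  refine ae_all_iff.2 fun i => (measure_eq_zero_iff_ae_notMem (s := X i ⁻¹' s)).1 ?_
  rw [← Measure.map_apply (hX i) hs, hident i, Measure.map_apply (hX j) hs]
  exact hnull

theorem prob_eq_one_of_ae {Ω : Type*} [MeasurableSpace Ω] {P : Measure Ω}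
    [IsProbabilityMeasure P] {s : Set Ω} (h : ∀ᵐ ω ∂P, ω ∈ s) : P s = 1 :=
  (measure_congr (ae_eq_univ.2 h)).trans measure_univ

section maxSpacing

variable {d : ℕ} {K A Q : Set (Fin d → ℝ)} {x : Fin d → ℝ} {r : ℝ}

theorem le_one_of_image_add_smul_subset (hd : d ≠ 0) (hK : volume K ≤ 1) (hA : volume A = 1)
    (hr : 0 ≤ r) (h : (fun y => x + r • y) '' A ⊆ K) : r ≤ 1 := by
  have hvol := (measure_mono h).trans hK
  rw [addHaar_image_add_smul volume x hr, Module.finrank_fin_fun, hA, mul_one,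
    ENNReal.ofReal_le_one] at hvol
  exact (pow_le_one_iff_of_nonneg hr hd).1 hvol

theorem maxSpacing_pow_le_one (hK : volume K ≤ 1) (hA : volume A = 1) (Q : Set (Fin d → ℝ)) :
    maxSpacing d K A Q ^ d ≤ 1 := by
  rcases eq_or_ne d 0 with rfl | hd
  · simp
  refine pow_le_one₀ (Real.sSup_nonneg fun r hr => hr.1) (Real.sSup_le ?_ zero_le_one)
  rintro r ⟨hr, x, hx⟩
  exact le_one_of_image_add_smul_subset hd hK hA hr (hx.trans Set.sdiff_subset)

-- For `d = 0` the admissible `r` may be unbounded (`sSup` is then junk), but both sides are `1`.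
theorem pow_le_maxSpacing_pow (hK : volume K ≤ 1) (hA : volume A = 1) (hr : 0 ≤ r)
    (h : (fun y => x + r • y) '' A ⊆ K \ Q) : r ^ d ≤ maxSpacing d K A Q ^ d := by
  rcases eq_or_ne d 0 with rfl | hd
  · simp
  refine pow_le_pow_left₀ hr ?_ d
  refine le_csSup ⟨1, ?_⟩ ⟨hr, x, h⟩
  rintro s ⟨hs, y, hy⟩
  exact le_one_of_image_add_smul_subset hd hK hA hs (hy.trans Set.sdiff_subset)

theorem exists_pos_le_maxSpacing_pow_of_disjoint {O : Set (Fin d → ℝ)} (hK : volume K ≤ 1)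
    (hA : volume A = 1) (hAb : Bornology.IsBounded A) (hO : IsOpen O) (hOne : O.Nonempty)
    (hOK : O ⊆ K) : ∃ c : ℝ, 0 < c ∧ ∀ Q, Disjoint Q O → c ≤ maxSpacing d K A Q ^ d := by
  obtain ⟨x, hx⟩ := hOne
  obtain ⟨r, hr, hsub⟩ := exists_pos_image_add_smul_subset hAb hO hx
  exact ⟨r ^ d, pow_pos hr d, fun Q hQ => pow_le_maxSpacing_pow hK hA hr.le
    (Set.subset_sdiff.2 ⟨hsub.trans hOK, hQ.symm.mono_left hsub⟩)⟩

end maxSpacing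

theorem spacings_test_consistent_of_null_open_set_general
    (d : ℕ)
    (K A : Set (Fin d → ℝ))
    (hKvol : volume K = 1)
    (hAb : Bornology.IsBounded A) (hAvol : volume A = 1)
    {Ω : Type*} [MeasurableSpace Ω] (P : Measure Ω) [IsProbabilityMeasure P]
    (X : ℕ → Ω → (Fin d → ℝ)) (hXmeas : ∀ i, Measurable (X i))
    (hXident : ∀ i, Measure.map (X i) P = Measure.map (X 1) P)
    (O : Set (Fin d → ℝ)) (hO : IsOpen O) (hOne : O.Nonempty) (hOK : O ⊆ K)
    (hOnull : P {ω | X 1 ω ∈ O} = 0)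
    (V : ℕ → Ω → ℝ)
    (hV : ∀ n ω, V n ω = (maxSpacing d K A ((fun i => X i ω) '' Set.Icc 1 n)) ^ d) :
    (∃ c : ℝ, 0 < c ∧ P {ω | ∀ n : ℕ, 1 ≤ n → c ≤ V n ω} = 1) ∧
    (∀ᵐ ω ∂P, 0 < Filter.liminf (fun n : ℕ => V n ω) atTop) ∧
    (∀ cs : ℕ → ℝ, (∀ n, 0 < cs n) → Tendsto cs atTop (nhds 0) →
      Tendsto (fun n : ℕ => P {ω | cs n < V n ω}) atTop (nhds 1)) := by
  obtain ⟨c, hc, hcV⟩ :=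
    exists_pos_le_maxSpacing_pow_of_disjoint hKvol.le hAvol hAb hO hOne hOK
  have hbounds : ∀ᵐ ω ∂P, ∀ n, c ≤ V n ω ∧ V n ω ≤ 1 := by
    filter_upwards [ae_forall_notMem_of_map_eq hXmeas hXident hO.measurableSet hOnull]
      with ω hω n
    rw [hV]
    refine ⟨hcV _ (Set.disjoint_left.2 ?_), maxSpacing_pow_le_one hKvol.le hAvol _⟩
    rintro _ ⟨i, -, rfl⟩
    exact hω i
  refine ⟨⟨c, hc, prob_eq_one_of_ae (hbounds.mono fun ω h n _ => (h n).1)⟩, ?_, ?_⟩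
  · filter_upwards [hbounds] with ω hω
    refine hc.trans_le (le_liminf_of_le ?_ (Eventually.of_forall fun n => (hω n).1))
    exact isCoboundedUnder_ge_of_le atTop fun n => (hω n).2
  · intro cs _ hcs
    refine tendsto_const_nhds.congr' ?_
    filter_upwards [(tendsto_order.1 hcs).2 c hc] with n hn
    exact (prob_eq_one_of_ae (hbounds.mono fun ω h => hn.trans_le (h n).1)).symm

/-- If the alternative distribution gives probability zero to a nonempty open subset
`O` of `K`, then almost surely every `Vₙ` is bounded below by some constant `c > 0`;
in particular `liminf Vₙ > 0` a.s., and `P(Vₙ > cₙ) → 1` for every positive null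
sequence `(cₙ)`, so the spacings test is consistent against such alternatives. -/
theorem spacings_test_consistent_of_null_open_set
    (d : ℕ) (hd : 1 ≤ d)
    (K A : Set (Fin d → ℝ))
    (hKb : Bornology.IsBounded K) (hKvol : volume K = 1)
    (hKfr : volume (frontier K) = 0)
    (hAb : Bornology.IsBounded A) (hAconv : Convex ℝ A)
    (hAint : (interior A).Nonempty) (hAvol : volume A = 1)
    {Ω : Type*} [MeasurableSpace Ω] (P : Measure Ω) [IsProbabilityMeasure P]
    (X : ℕ → Ω → (Fin d → ℝ)) (hXmeas : ∀ i, Measurable (X i))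
    (hXK : ∀ i ω, X i ω ∈ K)
    (hXindep : ProbabilityTheory.iIndepFun X P)
    (hXident : ∀ i, Measure.map (X i) P = Measure.map (X 1) P)
    (O : Set (Fin d → ℝ)) (hO : IsOpen O) (hOne : O.Nonempty) (hOK : O ⊆ K)
    (hOnull : P {ω | X 1 ω ∈ O} = 0)
    (V : ℕ → Ω → ℝ)
    (hV : ∀ n ω, V n ω = (maxSpacing d K A ((fun i => X i ω) '' Set.Icc 1 n)) ^ d) :
    (∃ c : ℝ, 0 < c ∧ P {ω | ∀ n : ℕ, 1 ≤ n → c ≤ V n ω} = 1) ∧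
    (∀ᵐ ω ∂P, 0 < Filter.liminf (fun n : ℕ => V n ω) atTop) ∧
    (∀ cs : ℕ → ℝ, (∀ n, 0 < cs n) → Tendsto cs atTop (nhds 0) →
      Tendsto (fun n : ℕ => P {ω | cs n < V n ω}) atTop (nhds 1)) :=
  spacings_test_consistent_of_null_open_set_general d K A hKvol hAb hAvol P X hXmeas hXident O hO
    hOne hOK hOnull V hV
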